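/- arXiv:1405.7126 — 2 statements merged into one kernel-verified Lean document; each statement's English description precedes it below -/
import Mathlib

section
/- The 2-dimensional complex evolution algebra E4 with natural basis {e1, e2} and multiplication e1·e1 = e2, e2·e2 = 0, e1·e2 = 0 satisfies: every 1-dimensional subalgebra is spanned by a scalar multiple of e2, and hence every subalgebra admits a natural basis extendable to a natural basis of E4. -/
open scoped BigOperators

/-- Evolution-algebra multiplication on `Fin n → ℂ` with structure matrix `A`. -/
noncomputable def evMul {n : ℕ} (A : Fin n → Fin n → ℂ) (x y : Fin n → ℂ) : Fin n → ℂ :=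
  fun j => ∑ i, x i * y i * A i j

/-- Structure constants of E₄ : e1² = e2, e2² = 0. -/
noncomputable def AE4 : Fin 2 → Fin 2 → ℂ := ![![0, 1], ![0, 0]]

/-!
Write `x = x₁ e₁ + x₂ e₂` (Lean indices `0, 1`). The product of E₄ is `x · y = x₁ y₁ e₂`, so
`x · x ∈ ⟨x⟩` forces `x₁ = 0`. A subalgebra containing a vector with `x₁ ≠ 0` contains
`e₂ = x₁⁻² (x · x)` and then `e₁`; one containing some `x ≠ 0` contains `e₂`. So every
subalgebra is a coordinate subspace: it is spanned by the natural basis vectors it contains.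
-/

theorem span_range_single_inter_eq {ι K : Type*} [Fintype ι] [DecidableEq ι] [Semiring K]
    {S : Submodule K (ι → K)} (hS : ∀ x ∈ S, ∀ i, x i ≠ 0 → Pi.single i 1 ∈ S) :
    Submodule.span K (Set.range (fun i => Pi.single i 1) ∩ S) = S := by
  refine le_antisymm (Submodule.span_le.2 Set.inter_subset_right) fun x hx => ?_
  rw [pi_eq_sum_univ' x]
  refine Submodule.sum_mem _ fun i _ => ?_
  by_cases hi : x i = 0
  · simp [hi]
  · exact Submodule.smul_mem _ _ (Submodule.subset_span ⟨⟨i, rfl⟩, hS x hx i hi⟩)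

theorem evMul_single_single_of_ne {n : ℕ} (A : Fin n → Fin n → ℂ) {i j : Fin n} (hij : i ≠ j) :
    evMul A (Pi.single i 1) (Pi.single j 1) = 0 := by
  funext k
  refine Finset.sum_eq_zero fun l _ => ?_
  by_cases hl : l = i
  · subst hl
    simp [Pi.single_eq_of_ne hij]
  · simp [Pi.single_eq_of_ne hl]

theorem evMul_AE4 (x y : Fin 2 → ℂ) : evMul AE4 x y = (x 0 * y 0) • Pi.single 1 1 := by
  funext j
  fin_cases j <;> simp [evMul, AE4, Fin.sum_univ_two]

theorem eq_smul_single_one_of_apply_zero {x : Fin 2 → ℂ} (hx : x 0 = 0) :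
    x = x 1 • Pi.single 1 1 := by
  funext j
  fin_cases j <;> simp [hx]

theorem apply_zero_eq_zero_of_evMul_AE4_self_mem_span {x : Fin 2 → ℂ}
    (h : evMul AE4 x x ∈ Submodule.span ℂ {x}) : x 0 = 0 := by
  obtain ⟨c, hc⟩ := Submodule.mem_span_singleton.1 h
  have h0 : c * x 0 = 0 := by simpa [evMul_AE4] using congrFun hc 0
  have h1 : c * x 1 = x 0 * x 0 := by simpa [evMul_AE4] using congrFun hc 1
  rcases mul_eq_zero.1 h0 with rfl | hx0
  · simpa using h1.symm
  · exact hx0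

section SquareClosed

variable {S : Submodule ℂ (Fin 2 → ℂ)}

theorem single_one_mem_of_ne_zero (hS : ∀ x ∈ S, evMul AE4 x x ∈ S) {x : Fin 2 → ℂ}
    (hxS : x ∈ S) (hx : x ≠ 0) : Pi.single 1 1 ∈ S := by
  by_cases hx0 : x 0 = 0
  · have hx1 : x 1 ≠ 0 := fun hx1 =>
      hx (by simpa [hx1] using eq_smul_single_one_of_apply_zero hx0)
    rw [eq_smul_single_one_of_apply_zero hx0] at hxS
    exact (S.smul_mem_iff hx1).1 hxS
  · have hxx := hS x hxS
    rw [evMul_AE4] at hxx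
    exact (S.smul_mem_iff (mul_ne_zero hx0 hx0)).1 hxx

theorem single_mem_of_apply_ne_zero (hS : ∀ x ∈ S, evMul AE4 x x ∈ S) {x : Fin 2 → ℂ}
    (hxS : x ∈ S) {i : Fin 2} (hi : x i ≠ 0) : Pi.single i 1 ∈ S := by
  have he₂ := single_one_mem_of_ne_zero hS hxS (fun hx => hi (by simp [hx]))
  fin_cases i
  · have hdiff : x - x 1 • Pi.single 1 1 = x 0 • Pi.single 0 1 := by
      funext j
      fin_cases j <;> simp
    have hmem := S.sub_mem hxS (S.smul_mem (x 1) he₂)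
    rw [hdiff] at hmem
    exact (S.smul_mem_iff hi).1 hmem
  · exact he₂

end SquareClosed

theorem stmt3 :
    let e : Fin 2 → (Fin 2 → ℂ) := fun i => Pi.single i 1
    -- every 1-dimensional subalgebra is spanned by a scalar multiple of e2,
    (∀ x : Fin 2 → ℂ, x ≠ 0 → evMul AE4 x x ∈ Submodule.span ℂ {x} →
      ∃ c : ℂ, x = c • e 1) ∧
    -- hence every subalgebra admits a natural basis extendable to a natural basis of E₄:
    (∀ S : Submodule ℂ (Fin 2 → ℂ), (∀ x ∈ S, ∀ y ∈ S, evMul AE4 x y ∈ S) →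
      ∃ s t : Set (Fin 2 → ℂ), s ⊆ t ∧
        LinearIndependent ℂ ((↑) : s → (Fin 2 → ℂ)) ∧ Submodule.span ℂ s = S ∧
        LinearIndependent ℂ ((↑) : t → (Fin 2 → ℂ)) ∧ Submodule.span ℂ t = ⊤ ∧
        (∀ x ∈ t, ∀ y ∈ t, x ≠ y → evMul AE4 x y = 0)) := by
  intro e
  refine ⟨fun x _ h => ⟨x 1, eq_smul_single_one_of_apply_zero
    (apply_zero_eq_zero_of_evMul_AE4_self_mem_span h)⟩, fun S hS => ?_⟩
  have hli : LinearIndepOn ℂ id (Set.range e) :=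
    (Pi.linearIndependent_single_one (Fin 2) ℂ).linearIndepOn_id
  have hspan : Submodule.span ℂ (Set.range e) = ⊤ := by
    simpa using span_range_single_inter_eq (S := (⊤ : Submodule ℂ (Fin 2 → ℂ))) (by simp)
  refine ⟨Set.range e ∩ S, Set.range e, Set.inter_subset_left, hli.mono Set.inter_subset_left,
    span_range_single_inter_eq fun x hx _ hi =>
      single_mem_of_apply_ne_zero (fun y hy => hS y hy y hy) hx hi,
    hli, hspan, ?_⟩
  rintro _ ⟨i, rfl⟩ _ ⟨j, rfl⟩ hij
  exact evMul_single_single_of_ne AE4 (ne_of_apply_ne e hij)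
end

section
/- In the 2-dimensional complex evolution algebra E3 with natural basis {e1, e2} and multiplication e1·e1 = e1+e2, e2·e2 = -e1-e2, e1·e2 = 0, the element x = e1+e2 satisfies x·x = 0, so ⟨x⟩ is a subalgebra; and for every y ∈ E3 with x·y = 0, the pair {x, y} is linearly dependent. Hence E3 does not satisfy condition P. -/
/-!
Both coordinates of `x · y` in E₃ equal `x₀ y₀ - x₁ y₁`. For `x = e₁ + e₂ = (1, 1)` this is
`y₀ - y₁`, so `x · x = 0`, and `x · y = 0` forces `y = y₀ • x`.
-/

open scoped BigOperators

/-- Structure constants of E₃ : e1² = e1+e2, e2² = -e1-e2. -/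
noncomputable def AE3 : Fin 2 → Fin 2 → ℂ := ![![1, 1], ![-1, -1]]

theorem evMul_AE3_apply (x y : Fin 2 → ℂ) (j : Fin 2) :
    evMul AE3 x y j = x 0 * y 0 - x 1 * y 1 := by
  fin_cases j <;> simp [evMul, AE3, Fin.sum_univ_two] <;> ring

theorem evMul_AE3_eq_zero_iff (x y : Fin 2 → ℂ) :
    evMul AE3 x y = 0 ↔ x 0 * y 0 = x 1 * y 1 := by
  rw [funext_iff]
  simp only [evMul_AE3_apply, Pi.zero_apply, sub_eq_zero, forall_const]

theorem eq_smul_of_evMul_AE3_eq_zero {x y : Fin 2 → ℂ} (hx0 : x 0 = 1) (hx1 : x 1 = 1)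
    (hxy : evMul AE3 x y = 0) : y = y 0 • x := by
  rw [evMul_AE3_eq_zero_iff, hx0, hx1, one_mul, one_mul] at hxy
  ext j
  fin_cases j <;> simp [hx0, hx1, hxy]

theorem LinearIndependent.not_pair_smul_right {R M : Type*} [Ring R] [Nontrivial R]
    [AddCommGroup M] [Module R M] (x : M) (c : R) : ¬ LinearIndependent R ![x, c • x] := by
  rw [LinearIndependent.pair_iff]
  intro h
  have := (h c (-1) (by rw [neg_one_smul, add_neg_cancel])).2
  exact one_ne_zero (neg_eq_zero.mp this)

theorem stmt5 :
    let e : Fin 2 → (Fin 2 → ℂ) := fun i => Pi.single i 1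
    let x : Fin 2 → ℂ := e 0 + e 1
    -- x·x = 0, so ⟨x⟩ is a subalgebra,
    evMul AE3 x x = 0 ∧
    -- and every y with x·y = 0 makes {x, y} linearly dependent
    (∀ y : Fin 2 → ℂ, evMul AE3 x y = 0 → ¬ LinearIndependent ℂ ![x, y]) := by
  intro e x
  have hx0 : x 0 = 1 := by simp [x, e]
  have hx1 : x 1 = 1 := by simp [x, e]
  refine ⟨by rw [evMul_AE3_eq_zero_iff, hx0, hx1], fun y hxy => ?_⟩
  rw [eq_smul_of_evMul_AE3_eq_zero hx0 hx1 hxy]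
  exact LinearIndependent.not_pair_smul_right x (y 0)
end
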